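/- arXiv:2003.12274 — 4 statements merged into one kernel-verified Lean document; each statement's English description precedes it below -/
import Mathlib

section
/- If ξ(x) < α for a state x of the product automaton, then there exists a finite event sequence s ∈ Σ_P^* such that δ_P(x, s) ∈ F_P, i.e., an accepting state is reachable from x. -/
open scoped Classical

/-- Extended (partial) transition function on finite event sequences. -/
def runOf {X E : Type} (δ : X → E → Option X) : List E → X → Option X
  | [], x => some x
  | e :: s, x => (δ x e).bind (runOf δ s)

/-- A string consisting only of unobservable events. -/
def UOString {E : Type} (uo : E → Prop) (s : List E) : Prop := ∀ e ∈ s, uo e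

/-- Natural projection erasing unobservable events. -/
noncomputable def proj {E : Type} (uo : E → Prop) (s : List E) : List E :=
  s.filter (fun e => decide (¬ uo e))

/-- Legal control pattern: events with some strictly rank-decreasing occurrence
within the unobservable reach of `x`. -/
def gammaLeg {X E : Type} (δ : X → E → Option X) (uo : E → Prop)
    (ξ : X → ℕ) (x : X) : Set E :=
  {σ | ∃ s y z, UOString uo s ∧ runOf δ s x = some y ∧ δ y σ = some z ∧ ξ z < ξ y}

/-- Unobservable reach of `x` under control pattern `γ`. -/
def UR {X E : Type} (δ : X → E → Option X) (uo : E → Prop)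
    (γ : Set E) (x : X) : Set X :=
  {x' | ∃ u : List E, (∀ e ∈ u, uo e ∧ e ∈ γ) ∧ runOf δ u x = some x'}

/-- Membership in the next-state estimate `NS(s_o)` after observation `s_o`. -/
inductive NSmem {X E : Type} (δ : X → E → Option X) (uo : E → Prop)
    (x0 : X) : List E → X → Prop
  | init : NSmem δ uo x0 [] x0
  | step {so : List E} {x x' x'' : X} {σ : E} :
      NSmem δ uo x0 so x →
      x' ∈ UR δ uo Set.univ x →
      ¬ uo σ → δ x' σ = some x'' → NSmem δ uo x0 (so ++ [σ]) x''

/-- Joint legal control pattern of the state estimate. -/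
def gammaLegNS {X E : Type} (δ : X → E → Option X) (uo : E → Prop) (ξ : X → ℕ)
    (x0 : X) (so : List E) : Set E :=
  {σ | ∃ x, NSmem δ uo x0 so x ∧ σ ∈ gammaLeg δ uo ξ x}

/-- Permissive control pattern at state `x` and step `k`. -/
def gammaPer {X E : Type} (δ : X → E → Option X) (uo : E → Prop) (ξ : X → ℕ)
    (η : ℕ → ℝ) (x : X) (k : ℕ) : Set E :=
  {σ | ∀ s z, UOString uo s → runOf δ (s ++ [σ]) x = some z → (ξ z : ℝ) < η k}

/-- Joint permissive control pattern of the state estimate. -/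
def gammaPerNS {X E : Type} (δ : X → E → Option X) (uo : E → Prop) (ξ : X → ℕ)
    (η : ℕ → ℝ) (x0 : X) (so : List E) (k : ℕ) : Set E :=
  {σ | ∀ x, NSmem δ uo x0 so x → σ ∈ gammaPer δ uo ξ η x k}

/-- The on-line supervisor's control action after observation `so`. -/
def supAct {X E : Type} (δ : X → E → Option X) (uo : E → Prop) (ξ : X → ℕ)
    (η : ℕ → ℝ) (x0 : X) (so : List E) : Set E :=
  gammaLegNS δ uo ξ x0 so ∪ gammaPerNS δ uo ξ η x0 so so.length

/-- `ξ̂(x)`: min over controllable successors' ranks if no uncontrollable event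
is defined at `x`, else max over uncontrollable successors' ranks. -/
noncomputable def hatXi {X E : Type} (δ : X → E → Option X) (uc : E → Prop)
    (ξ : X → ℕ) (x : X) : ℕ :=
  if ∀ e, uc e → δ x e = none then
    sInf {n | ∃ e y, ¬ uc e ∧ δ x e = some y ∧ ξ y = n}
  else
    sSup {n | ∃ e y, uc e ∧ δ x e = some y ∧ ξ y = n}

/-- The update operator `up_α(r, x)`. -/
noncomputable def upA {X : Type} (α : ℕ) (F : Set X) (x : X) (r : ℕ) : ℕ :=
  if x ∉ F ∧ r < α then r + 1 else r

/-- Observability of the product automaton w.r.t. `ξ` and the projection. -/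
def Observable {X E : Type} (δ : X → E → Option X) (uo : E → Prop)
    (ξ : X → ℕ) (x0 : X) : Prop :=
  ∀ s s' : List E, ∀ σ : E,
    (runOf δ s x0).isSome → (runOf δ s' x0).isSome →
    proj uo s = proj uo s' →
    (∃ y z, runOf δ s x0 = some y ∧ δ y σ = some z ∧ ξ z < ξ y) →
    (runOf δ (s' ++ [σ]) x0).isSome →
    ∃ y z, runOf δ s' x0 = some y ∧ δ y σ = some z ∧ ξ z < ξ y

/-- The list of states visited along a run. -/
def visited {X E : Type} (δ : X → E → Option X) : List E → X → Option (List X)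
  | [], x => some [x]
  | e :: s, x => (δ x e).bind fun y => (visited δ s y).map (fun l => x :: l)

/-! At a non-accepting state `x` with `ξ x < α`, the fixed-point inequality `up_α(ξ̂ x, x) ≤ ξ x`
forces `ξ̂ x < ξ x`, and `ξ̂ x` is the rank of an actual successor of `x`. Following such
successors the rank strictly decreases, so a path from `x` must reach `F`. -/

/-- A state with a successor has one whose rank is exactly `ξ̂`: the `sInf` is taken over a
nonempty set of naturals, the `sSup` over a nonempty finite one. -/
lemma exists_succ_rank_eq_hatXi {X E : Type} [Finite X] (δ : X → E → Option X)
    (uc : E → Prop) (ξ : X → ℕ) {x : X} (hx : ∃ e, (δ x e).isSome) :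
    ∃ e y, δ x e = some y ∧ ξ y = hatXi δ uc ξ x := by
  unfold hatXi
  split_ifs with hnouc
  · obtain ⟨e, y, hy⟩ : ∃ e y, δ x e = some y := by
      obtain ⟨e, he⟩ := hx
      exact ⟨e, Option.isSome_iff_exists.mp he⟩
    have hnonempty : {n | ∃ e y, ¬ uc e ∧ δ x e = some y ∧ ξ y = n}.Nonempty :=
      ⟨ξ y, e, y, fun huc => by simp [hnouc e huc] at hy, hy, rfl⟩
    obtain ⟨e', y', -, hy', hξ⟩ := Nat.sInf_mem hnonempty
    exact ⟨e', y', hy', hξ⟩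
  · push Not at hnouc
    obtain ⟨e, huc, hdef⟩ := hnouc
    obtain ⟨y, hy⟩ := Option.ne_none_iff_exists'.mp hdef
    have hnonempty : {n | ∃ e y, uc e ∧ δ x e = some y ∧ ξ y = n}.Nonempty :=
      ⟨ξ y, e, y, huc, hy, rfl⟩
    have hbdd : BddAbove {n | ∃ e y, uc e ∧ δ x e = some y ∧ ξ y = n} :=
      (Set.finite_range ξ).bddAbove.mono (by rintro _ ⟨-, y, -, -, rfl⟩; exact ⟨y, rfl⟩)
    obtain ⟨e', y', -, hy', hξ⟩ := Nat.sSup_mem hnonempty hbdd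
    exact ⟨e', y', hy', hξ⟩

lemma lt_of_upA_le {X : Type} {α : ℕ} {F : Set X} {x : X} {r n : ℕ}
    (hx : x ∉ F) (hn : n < α) (h : upA α F x r ≤ n) : r < n := by
  unfold upA at h
  split_ifs at h with hup
  · omega
  · exact lt_of_le_of_ne h fun hrn => hup ⟨hx, hrn ▸ hn⟩

lemma exists_run_mem_of_rank_descent {X E : Type} (δ : X → E → Option X) (F : Set X)
    (ξ : X → ℕ) (α : ℕ) (hdesc : ∀ x, x ∉ F → ξ x < α → ∃ e y, δ x e = some y ∧ ξ y < ξ x)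
    (x : X) (hx : ξ x < α) : ∃ (s : List E) (y : X), runOf δ s x = some y ∧ y ∈ F := by
  induction hn : ξ x using Nat.strong_induction_on generalizing x with
  | _ n ih =>
    by_cases hxF : x ∈ F
    · exact ⟨[], x, rfl, hxF⟩
    obtain ⟨e, y, hxy, hlt⟩ := hdesc x hxF hx
    obtain ⟨s, z, hyz, hzF⟩ := ih (ξ y) (hn ▸ hlt) y (hlt.trans hx) rfl
    exact ⟨e :: s, z, by simp [runOf, hxy, hyz], hzF⟩

theorem stmt1_general {X E : Type} [Fintype X] (δ : X → E → Option X) (uc : E → Prop)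
    (F : Finset X)
    (hdf : ∀ x : X, ∃ e, (δ x e).isSome)
    (ξ : X → ℕ)
    (hfix : ∀ x, upA (Fintype.card X - F.card + 1) (↑F) x (hatXi δ uc ξ x) ≤ ξ x) :
    ∀ x : X, ξ x < Fintype.card X - F.card + 1 →
      ∃ (s : List E) (y : X), runOf δ s x = some y ∧ y ∈ F := by
  refine exists_run_mem_of_rank_descent δ (↑F) ξ _ fun x hxF hxα => ?_
  obtain ⟨e, y, hxy, hy⟩ := exists_succ_rank_eq_hatXi δ uc ξ (hdf x)
  exact ⟨e, y, hxy, hy ▸ lt_of_upA_le hxF hxα (hfix x)⟩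

/-- if `ξ(x) < α` then an accepting state is reachable from `x`. -/
theorem stmt1 {X E : Type} [Fintype X] (δ : X → E → Option X) (uc : E → Prop)
    (F : Finset X)
    (hdf : ∀ x : X, ∃ e, (δ x e).isSome)
    (ξ : X → ℕ)
    (hfix : ∀ x, upA (Fintype.card X - F.card + 1) (↑F) x (hatXi δ uc ξ x) ≤ ξ x)
    (hleast : ∀ ξ' : X → ℕ,
      (∀ x, upA (Fintype.card X - F.card + 1) (↑F) x (hatXi δ uc ξ' x) ≤ ξ' x) →
      ∀ x, ξ x ≤ ξ' x) :
    ∀ x : X, ξ x < Fintype.card X - F.card + 1 →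
      ∃ (s : List E) (y : X), runOf δ s x = some y ∧ y ∈ F :=
  stmt1_general δ uc F hdf ξ hfix
end

section
/- Assume the product automaton P is controllable and observable with respect to ξ and the natural projection 𝒫. Then for any non-accepting state x reachable in P, every event σ in the legal control pattern γ̂_leg(x) triggers only rank-decreasing transitions within the unobservable reach of x: for all s ∈ Σ_{uo}^*, if δ_P(x, s)! and δ_P(x, sσ)!, then ξ(δ_P(x, s)) > ξ(δ_P(x, sσ)). -/
open scoped Classical

lemma runOf_append {X E : Type} (δ : X → E → Option X) (a b : List E) (x : X) :
    runOf δ (a ++ b) x = (runOf δ a x).bind (runOf δ b) := by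
  induction a generalizing x with
  | nil => simp [runOf]
  | cons e s ih =>
      simp only [List.cons_append, runOf]
      cases δ x e with
      | none => simp
      | some y => simp [ih]

lemma proj_uo_nil {E : Type} (uo : E → Prop) (s : List E) (h : UOString uo s) :
    proj uo s = [] := by
  simp only [proj, List.filter_eq_nil_iff]
  intro e he
  simpa using h e he

/-- under controllability and observability, every event in the
legal control pattern of a reachable non-accepting state triggers only
rank-decreasing transitions within the unobservable reach. -/
theorem stmt5 {X E : Type} (δ : X → E → Option X) (uo : E → Prop)
    (F : Set X) (x0 : X) (ξ : X → ℕ) (α : ℕ)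
    (hctrl : ξ x0 < α)
    (hobs : Observable δ uo ξ x0) :
    ∀ x : X, (∃ t : List E, runOf δ t x0 = some x) → x ∉ F →
      ∀ σ ∈ gammaLeg δ uo ξ x,
        ∀ (s : List E) (y z : X), UOString uo s →
          runOf δ s x = some y → δ y σ = some z → ξ z < ξ y := by
  rintro x ⟨t, ht⟩ _ σ ⟨s₁, y₁, z₁, hs₁uo, hrun₁, hδ₁, hlt₁⟩ s y z hsuo hruns hδ
  have key := hobs (t ++ s₁) (t ++ s) σ
    (by rw [runOf_append, ht]; simp [hrun₁])
    (by rw [runOf_append, ht]; simp [hruns])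
    (by simp only [proj, List.filter_append]
        rw [show s₁.filter (fun e => decide (¬ uo e)) = [] from proj_uo_nil uo s₁ hs₁uo,
            show s.filter (fun e => decide (¬ uo e)) = [] from proj_uo_nil uo s hsuo])
    ⟨y₁, z₁, by rw [runOf_append, ht]; simpa using hrun₁, hδ₁, hlt₁⟩
    (by rw [List.append_assoc, runOf_append, ht]
        simp [runOf_append, hruns, runOf, hδ])
  obtain ⟨y', z', hy', hδ', hlt'⟩ := key
  rw [runOf_append, ht] at hy'
  rw [show (some x).bind (runOf δ s) = runOf δ s x from rfl, hruns] at hy'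
  cases hy'
  rw [hδ] at hδ'
  cases hδ'
  exact hlt'
end

section
/- If P is controllable and observable, then for any observation s_o ∈ 𝒫(ℒ(P)) and any x ∈ NS(s_o), the unobservable reach of x under the joint legal control pattern equals the unobservable reach under x's own legal control pattern: UR_{γ̂_leg(NS(s_o))}(x) = UR_{γ̂_leg(x)}(x). -/
open scoped Classical

lemma proj_append {E : Type} (uo : E → Prop) (a b : List E) :
    proj uo (a ++ b) = proj uo a ++ proj uo b := by
  simp [proj, List.filter_append]

lemma proj_uo {E : Type} {uo : E → Prop} {s : List E} (h : UOString uo s) :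
    proj uo s = [] := by
  simp only [proj, List.filter_eq_nil_iff]
  intro e he
  simpa using h e he

lemma proj_obs {E : Type} {uo : E → Prop} {σ : E} (h : ¬ uo σ) :
    proj uo [σ] = [σ] := by
  simp [proj, h]

lemma NSmem_reach {X E : Type} {δ : X → E → Option X} {uo : E → Prop}
    {x0 : X} {so : List E} {x : X} (h : NSmem δ uo x0 so x) :
    ∃ t, runOf δ t x0 = some x ∧ proj uo t = so := by
  induction h with
  | init => exact ⟨[], rfl, rfl⟩
  | @step so x x' x'' σ _ hUR hσ hδ ih =>
    obtain ⟨t, ht, hpt⟩ := ih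
    obtain ⟨u, hu, hru⟩ := hUR
    refine ⟨t ++ u ++ [σ], ?_, ?_⟩
    · rw [runOf_append, runOf_append, ht]
      simp [hru, runOf, hδ]
    · rw [proj_append, proj_append, hpt, proj_uo (fun e he => (hu e he).1),
        proj_obs hσ, List.append_nil]

/-- under controllability and observability, the unobservable
reach of `x ∈ NS(s_o)` under the joint legal pattern coincides with that
under `x`'s own legal pattern. -/
theorem stmt7 {X E : Type} (δ : X → E → Option X) (uo : E → Prop)
    (x0 : X) (ξ : X → ℕ) (α : ℕ)
    (hctrl : ξ x0 < α)
    (hobs : Observable δ uo ξ x0)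
    (so : List E)
    (hso : ∃ t : List E, (runOf δ t x0).isSome ∧ proj uo t = so) :
    ∀ x : X, NSmem δ uo x0 so x →
      UR δ uo (gammaLegNS δ uo ξ x0 so) x = UR δ uo (gammaLeg δ uo ξ x) x := by
  intro x hx
  ext x'
  simp only [UR, Set.mem_setOf_eq]
  constructor
  · rintro ⟨u, hu, hr⟩
    refine ⟨u, fun e he => ⟨(hu e he).1, ?_⟩, hr⟩
    -- decompose u at e
    obtain ⟨p, q, rfl⟩ := List.append_of_mem he
    obtain ⟨t, ht, hpt⟩ := NSmem_reach hx
    obtain ⟨x₂, hx₂, s₂, y₂, z₂, hs₂, hr₂, hδ₂, hlt₂⟩ := (hu e he).2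
    obtain ⟨t₂, ht₂, hpt₂⟩ := NSmem_reach hx₂
    -- run of p from x
    rw [runOf_append] at hr
    obtain ⟨y, hy, hey⟩ : ∃ y, runOf δ p x = some y ∧ runOf δ (e :: q) y = some x' := by
      cases hp : runOf δ p x with
      | none => rw [hp] at hr; simp at hr
      | some y => exact ⟨y, rfl, by rw [hp] at hr; simpa using hr⟩
    obtain ⟨z, hz, _⟩ : ∃ z, δ y e = some z ∧ runOf δ q z = some x' := by
      simp only [runOf] at hey
      cases hde : δ y e with
      | none => rw [hde] at hey; simp at hey
      | some z => exact ⟨z, rfl, by rw [hde] at hey; simpa using hey⟩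
    have hp_uo : UOString uo p := fun a ha => (hu a (by simp [ha])).1
    have hrun_tp : runOf δ (t ++ p) x0 = some y := by
      rw [runOf_append, ht]; simpa using hy
    have hrun_ts : runOf δ (t₂ ++ s₂) x0 = some y₂ := by
      rw [runOf_append, ht₂]; simpa using hr₂
    have hproj : proj uo (t₂ ++ s₂) = proj uo (t ++ p) := by
      rw [proj_append, proj_append, hpt, hpt₂, proj_uo hs₂, proj_uo hp_uo]
    have hconc := hobs (t₂ ++ s₂) (t ++ p) e
      (by rw [hrun_ts]; rfl) (by rw [hrun_tp]; rfl) hproj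
      ⟨y₂, z₂, hrun_ts, hδ₂, hlt₂⟩
      (by rw [runOf_append, hrun_tp]; simp [runOf, hz])
    obtain ⟨Y, Z, hY, hZ, hlt⟩ := hconc
    rw [hrun_tp] at hY
    injection hY with hYy
    subst hYy
    exact ⟨p, y, Z, hp_uo, hy, hZ, hlt⟩
  · rintro ⟨u, hu, hr⟩
    exact ⟨u, fun e he => ⟨(hu e he).1, ⟨x, hx, (hu e he).2⟩⟩, hr⟩
end

section
/- In the ranking-function algorithm, the computed ξ satisfies the ranking-function condition of Definition 2: for all x ∈ X_P and all uncontrollable σ defined at x, ξ(x) ≥ min{ξ(δ_P(x, σ)) + Ī_{F_P}(x), α}, where Ī_{F_P}(x) = 1 iff x ∉ F_P. -/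
open scoped Classical

-- `sSup` of an unbounded subset of `ℕ` is `0`, so finiteness of `X` is what makes this true.
theorem le_hatXi_of_uc {X E : Type} [Finite X] {δ : X → E → Option X} {uc : E → Prop}
    {ξ : X → ℕ} {x y : X} {e : E} (he : uc e) (hxy : δ x e = some y) :
    ξ y ≤ hatXi δ uc ξ x := by
  have hblocked : ¬ ∀ e', uc e' → δ x e' = none := fun h => by simp [h e he] at hxy
  rw [hatXi, if_neg hblocked]
  refine le_csSup ((Set.finite_range ξ).subset ?_).bddAbove ⟨e, y, he, hxy, rfl⟩
  rintro _ ⟨_, y', _, _, rfl⟩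
  exact ⟨y', rfl⟩

theorem min_add_ite_le_upA {X : Type} {α : ℕ} {F : Set X} {x : X} [Decidable (x ∈ F)]
    {s r : ℕ} (hsr : s ≤ r) : min (s + if x ∈ F then 0 else 1) α ≤ upA α F x r := by
  unfold upA
  split_ifs <;> grind

theorem stmt16_general {X E : Type} [Fintype X] (δ : X → E → Option X) (uc : E → Prop)
    (F : Finset X)
    (ξ : X → ℕ)
    (hfix : ∀ x, upA (Fintype.card X - F.card + 1) (↑F) x (hatXi δ uc ξ x) ≤ ξ x) :
    ∀ (x : X) (e : E) (y : X), uc e → δ x e = some y →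
      min (ξ y + (if x ∈ F then 0 else 1)) (Fintype.card X - F.card + 1)
        ≤ ξ x := by
  intro x e y he hxy
  exact (min_add_ite_le_upA (le_hatXi_of_uc he hxy)).trans (hfix x)

/-- the fixed-point ranking function satisfies the
ranking-function condition of Definition 2. -/
theorem stmt16 {X E : Type} [Fintype X] (δ : X → E → Option X) (uc : E → Prop)
    (F : Finset X)
    (hdf : ∀ x : X, ∃ e, (δ x e).isSome)
    (ξ : X → ℕ)
    (hfix : ∀ x, upA (Fintype.card X - F.card + 1) (↑F) x (hatXi δ uc ξ x) ≤ ξ x)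
    (hleast : ∀ ξ' : X → ℕ,
      (∀ x, upA (Fintype.card X - F.card + 1) (↑F) x (hatXi δ uc ξ' x) ≤ ξ' x) →
      ∀ x, ξ x ≤ ξ' x) :
    ∀ (x : X) (e : E) (y : X), uc e → δ x e = some y →
      min (ξ y + (if x ∈ F then 0 else 1)) (Fintype.card X - F.card + 1)
        ≤ ξ x :=
  stmt16_general δ uc F ξ hfix
end
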